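/- arXiv:1908.10185 — 2 statements merged into one kernel-verified Lean document; each statement's English description precedes it below -/
import Mathlib

section
/- Let I be an 𝔪-primary monomial ideal in K[x_1,…,x_n]. If every minimal generator x_1^{α_1}x_2^{α_2}⋯x_n^{α_n} of I that is not a corner satisfies α_1/d_1 + α_2/d_2 + ⋯ + α_n/d_n ≥ n/2, then I is a good ideal. -/
open MvPolynomial

namespace GasanovaRR

/-- The monomial `x^α` in `K[x_1,…,x_n]`. -/
noncomputable def mono (K : Type*) [Field K] {n : ℕ} (α : Fin n → ℕ) :
    MvPolynomial (Fin n) K :=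
  MvPolynomial.monomial (Finsupp.equivFunOnFinite.symm α) 1

/-- `I` is a monomial ideal: it is generated by a set of monomials. -/
def IsMonomialIdeal {K : Type*} [Field K] {n : ℕ}
    (I : Ideal (MvPolynomial (Fin n) K)) : Prop :=
  ∃ A : Set (Fin n → ℕ), I = Ideal.span (mono K '' A)

/-- `x^α` is a minimal monomial generator of `I`, i.e. `x^α ∈ G(I)`:
`x^α ∈ I` and no monomial in `I` strictly divides it. -/
def IsMinGen {K : Type*} [Field K] {n : ℕ}
    (I : Ideal (MvPolynomial (Fin n) K)) (α : Fin n → ℕ) : Prop :=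
  mono K α ∈ I ∧ ∀ β : Fin n → ℕ, mono K β ∈ I → β ≤ α → β = α

/-- The point `α` lies in the box `B_{a_1,…,a_n}` (for box sizes `d_1,…,d_n`). -/
def InBox {n : ℕ} (d a α : Fin n → ℕ) : Prop :=
  ∀ i, a i * d i ≤ α i ∧ α i ≤ (a i + 1) * d i

/-- `I` is a good ideal (w.r.t. box sizes `d`): for every `l ≥ 1`, every minimal
generator of `I^l` lies in a box whose coordinate sum is `l - 1`. -/
def IsGood {K : Type*} [Field K] {n : ℕ}
    (I : Ideal (MvPolynomial (Fin n) K)) (d : Fin n → ℕ) : Prop :=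
  ∀ l : ℕ, 1 ≤ l → ∀ α : Fin n → ℕ, IsMinGen (I ^ l) α →
    ∃ a : Fin n → ℕ, InBox d a α ∧ ∑ i, a i = l - 1

/-- `I` is an `𝔪`-primary monomial ideal whose minimal generating set contains
`μ_i = x_i^{d_i}` with `d_i > 0` for each `i`. -/
def MPrimaryWithCorners {K : Type*} [Field K] {n : ℕ}
    (I : Ideal (MvPolynomial (Fin n) K)) (d : Fin n → ℕ) : Prop :=
  IsMonomialIdeal I ∧ I ≠ ⊤ ∧ (∀ i, 0 < d i) ∧ ∀ i, IsMinGen I (Pi.single i (d i))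

/-- The ideal `I_{a_1,…,a_n}` associated to the box `B_{a_1,…,a_n}`, generated by
`m / (μ_1^{a_1}⋯μ_n^{a_n})` for `m ∈ B_{a_1,…,a_n} ∩ G(I^l)`, `l = a_1+⋯+a_n+1`. -/
noncomputable def boxIdeal {K : Type*} [Field K] {n : ℕ}
    (I : Ideal (MvPolynomial (Fin n) K)) (d a : Fin n → ℕ) :
    Ideal (MvPolynomial (Fin n) K) :=
  Ideal.span ((fun α => mono K (α - fun i => a i * d i)) ''
    {α | InBox d a α ∧ IsMinGen (I ^ (∑ i, a i + 1)) α})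

/-- The Ratliff–Rush closure `Ĩ = ⋃_{k ≥ 0} (I^{k+1} : I^k)`. -/
noncomputable def ratliffRush {K : Type*} [Field K] {n : ℕ}
    (I : Ideal (MvPolynomial (Fin n) K)) : Ideal (MvPolynomial (Fin n) K) :=
  ⨆ k : ℕ, (I ^ (k + 1)).colon ((I ^ k : Ideal (MvPolynomial (Fin n) K)) : Set (MvPolynomial (Fin n) K))

/-- The cone in `ℕ^n` with set `S` of fixed coordinates and vertex `v`. -/
def Cone {n : ℕ} (S : Set (Fin n)) (v : Fin n → ℕ) : Set (Fin n → ℕ) :=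
  {b | (∀ i ∈ S, b i = v i) ∧ ∀ i ∉ S, v i ≤ b i}

/-- `I` is a very good ideal: it is good and `I_{a_1,…,a_n} = I` for all boxes. -/
def IsVeryGood {K : Type*} [Field K] {n : ℕ}
    (I : Ideal (MvPolynomial (Fin n) K)) (d : Fin n → ℕ) : Prop :=
  IsGood I d ∧ ∀ a : Fin n → ℕ, boxIdeal I d a = I

/-!
Write a minimal generator `x^α` of `I^l` as a product of `l` minimal generators of `I`. A box
`B_a` containing `α` with `∑ a_i = l - 1` exists as soon as
`∑ (⌈α_i/d_i⌉ - 1) ≤ l - 1 ≤ ∑ ⌊α_i/d_i⌋`.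

The first inequality holds whenever all `μ_i` lie in `I`: otherwise the corner
`∏ μ_i^{⌈α_i/d_i⌉ - 1}` would lie in `I^l` and divide `x^α`, hence equal it, which is absurd
for a corner. For the second, a factor that is a corner is some `μ_i` and adds one to
`∑ ⌊α_i/d_i⌋`. The `t` factors that are not corners have a sum `B` with
`t·n/2 ≤ ∑ B_i/d_i < ∑ ⌊B_i/d_i⌋ + n`, so `t ≤ ∑ ⌊B_i/d_i⌋ + 1` because `n ≥ 2` once `t > 0`.
-/

section Monomials

variable {K : Type*} [Field K] {n : ℕ} {I : Ideal (MvPolynomial (Fin n) K)}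

lemma mono_zero : mono K (0 : Fin n → ℕ) = 1 := by
  rw [mono, show Finsupp.equivFunOnFinite.symm (0 : Fin n → ℕ) = 0 from Finsupp.ext fun _ => rfl]
  rfl

lemma mono_add (α β : Fin n → ℕ) : mono K (α + β) = mono K α * mono K β := by
  rw [mono, mono, mono, monomial_mul, mul_one]
  congr 2
  exact Finsupp.ext fun _ => rfl

lemma mono_sum {ι : Type*} (s : Finset ι) (g : ι → Fin n → ℕ) :
    mono K (∑ j ∈ s, g j) = ∏ j ∈ s, mono K (g j) := by
  classical
  induction s using Finset.induction_on with
  | empty => simp [mono_zero]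
  | insert j s hj ih => rw [Finset.sum_insert hj, Finset.prod_insert hj, mono_add, ih]

lemma mono_nsmul (k : ℕ) (β : Fin n → ℕ) : mono K (k • β) = mono K β ^ k := by
  induction k with
  | zero => simp [mono_zero]
  | succ k ih => rw [succ_nsmul, mono_add, ih, pow_succ]

lemma mono_sum_mem_pow {ι : Type*} {s : Finset ι}
    {g : ι → Fin n → ℕ} {c : ι → ℕ} (h : ∀ j ∈ s, mono K (g j) ∈ I ^ c j) :
    mono K (∑ j ∈ s, g j) ∈ I ^ ∑ j ∈ s, c j := by
  rw [mono_sum, ← Finset.prod_pow_eq_pow_sum]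
  exact Ideal.prod_mem_prod h

lemma mono_corner_mem_pow {d : Fin n → ℕ}
    (hμ : ∀ i, mono K (Pi.single i (d i)) ∈ I) (k : Fin n → ℕ) :
    mono K (fun i => k i * d i) ∈ I ^ ∑ i, k i := by
  have hcorner : (fun i => k i * d i) = ∑ i, k i • (Pi.single i (d i) : Fin n → ℕ) := by
    ext j
    simp [Finset.sum_apply, Pi.single_apply]
  rw [hcorner]
  exact mono_sum_mem_pow fun i _ => by
    rw [mono_nsmul]
    exact Ideal.pow_mem_pow (hμ i) _

lemma mono_mem_span_iff {A : Set (Fin n → ℕ)} {γ : Fin n → ℕ} :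
    mono K γ ∈ Ideal.span (mono K '' A) ↔ ∃ δ ∈ A, δ ≤ γ := by
  classical
  have himage : mono K '' A =
      (fun s => monomial s (1 : K)) '' (Finsupp.equivFunOnFinite.symm '' A) := by
    rw [Set.image_image]; rfl
  rw [himage, mono, mem_ideal_span_monomial_image, support_monomial, if_neg one_ne_zero]
  simp only [Finset.mem_singleton, forall_eq, Set.mem_image, exists_exists_and_eq_and,
    Finsupp.le_def, Finsupp.coe_equivFunOnFinite_symm]
  rfl

lemma span_mono_pow (A : Set (Fin n → ℕ)) (l : ℕ) :
    Ideal.span (mono K '' A) ^ l =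
      Ideal.span (mono K '' {γ | ∃ f : Fin l → Fin n → ℕ, (∀ j, f j ∈ A) ∧ γ = ∑ j, f j}) := by
  induction l with
  | zero =>
    have hzero : {γ : Fin n → ℕ | ∃ f : Fin 0 → Fin n → ℕ, (∀ j, f j ∈ A) ∧ γ = ∑ j, f j}
        = {0} := by
      ext γ
      simp
    rw [pow_zero, hzero, Set.image_singleton, mono_zero, Ideal.span_singleton_one,
      Ideal.one_eq_top]
  | succ l ih =>
    rw [pow_succ, ih, Ideal.span_mul_span']
    congr 1
    ext p
    constructor
    · rintro ⟨_, ⟨_, ⟨f, hf, rfl⟩, rfl⟩, _, ⟨δ, hδ, rfl⟩, rfl⟩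
      refine ⟨∑ j, f j + δ, ⟨Fin.snoc f δ, fun j => ?_, by simp [Fin.sum_univ_castSucc]⟩,
        mono_add _ _⟩
      refine Fin.lastCases ?_ (fun j => ?_) j
      · simpa using hδ
      · simpa using hf j
    · rintro ⟨_, ⟨f, hf, rfl⟩, rfl⟩
      refine ⟨_, ⟨_, ⟨fun j => f (Fin.castSucc j), fun j => hf _, rfl⟩, rfl⟩,
        _, ⟨f (Fin.last l), hf _, rfl⟩, ?_⟩
      show mono K _ * mono K _ = _
      rw [← mono_add, Fin.sum_univ_castSucc f]

lemma exists_isMinGen_le {γ : Fin n → ℕ}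
    (hγ : mono K γ ∈ I) : ∃ β ≤ γ, IsMinGen I β := by
  obtain ⟨β, ⟨hβI, hβγ⟩, hmin⟩ :=
    wellFounded_lt.has_min {β | mono K β ∈ I ∧ β ≤ γ} ⟨γ, hγ, le_rfl⟩
  refine ⟨β, hβγ, hβI, fun β' hβ'I hβ'β => ?_⟩
  by_contra hne
  exact hmin β' ⟨hβ'I, hβ'β.trans hβγ⟩ (lt_of_le_of_ne hβ'β hne)

lemma IsMonomialIdeal.exists_isMinGen_sum_le (hI : IsMonomialIdeal I) {l : ℕ} {γ : Fin n → ℕ} (hγ : mono K γ ∈ I ^ l) :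
    ∃ β : Fin l → Fin n → ℕ, (∀ j, IsMinGen I (β j)) ∧ ∑ j, β j ≤ γ := by
  obtain ⟨A, rfl⟩ := hI
  rw [span_mono_pow, mono_mem_span_iff] at hγ
  obtain ⟨_, ⟨f, hfA, rfl⟩, hfγ⟩ := hγ
  choose β hβf hβ using fun j =>
    exists_isMinGen_le (Ideal.subset_span (Set.mem_image_of_mem (mono K) (hfA j)))
  exact ⟨β, hβ, (Finset.sum_le_sum fun j _ => hβf j).trans hfγ⟩

lemma IsMinGen.exists_eq_sum (hI : IsMonomialIdeal I)
    {l : ℕ} {α : Fin n → ℕ} (hα : IsMinGen (I ^ l) α) :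
    ∃ β : Fin l → Fin n → ℕ, (∀ j, IsMinGen I (β j)) ∧ ∑ j, β j = α := by
  obtain ⟨β, hβ, hβα⟩ := hI.exists_isMinGen_sum_le hα.1
  have hmem : mono K (∑ j, β j) ∈ I ^ l := by
    have := mono_sum_mem_pow (s := Finset.univ) (c := fun _ => 1)
      fun j _ => (pow_one I).symm ▸ (hβ j).1
    rwa [Finset.sum_const, Finset.card_fin, smul_eq_mul, mul_one] at this
  exact ⟨β, hβ, hα.2 _ hmem hβα⟩

end Monomials

section Corners

def IsCorner {n : ℕ} (d β : Fin n → ℕ) : Prop :=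
  ∃ k : Fin n → ℕ, β = fun i => k i * d i

lemma isCorner_single {n : ℕ} (d : Fin n → ℕ) (i : Fin n) : IsCorner d (Pi.single i (d i)) :=
  ⟨Pi.single i 1, funext fun j => by rcases eq_or_ne j i with rfl | hji <;> simp [*]⟩

variable {K : Type*} [Field K] {n : ℕ} {I : Ideal (MvPolynomial (Fin n) K)} {d : Fin n → ℕ}

lemma IsMinGen.ne_zero (hI : I ≠ ⊤) {β : Fin n → ℕ} (hβ : IsMinGen I β) : β ≠ 0 := by
  rintro rfl
  exact hI ((Ideal.eq_top_iff_one I).2 (mono_zero (K := K) ▸ hβ.1))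

lemma IsMinGen.eq_single_of_le {β : Fin n → ℕ} {i : Fin n}
    (hμ : mono K (Pi.single i (d i)) ∈ I) (hβ : IsMinGen I β) (h : d i ≤ β i) :
    β = Pi.single i (d i) :=
  (hβ.2 _ hμ fun j => by rcases eq_or_ne j i with rfl | hji <;> simp [*]).symm

lemma IsMinGen.eq_single_of_isCorner (hI : MPrimaryWithCorners I d) {β : Fin n → ℕ}
    (hβ : IsMinGen I β) (hc : IsCorner d β) : ∃ i, β = Pi.single i (d i) := by
  obtain ⟨-, hItop, -, hμ⟩ := hI
  obtain ⟨k, rfl⟩ := hc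
  obtain ⟨i, hi⟩ : ∃ i, k i ≠ 0 := by
    by_contra! hk
    exact hβ.ne_zero hItop (funext fun i => by simp [hk i])
  exact ⟨i, hβ.eq_single_of_le (hμ i).1 (Nat.le_mul_of_pos_left _ (Nat.pos_of_ne_zero hi))⟩

/-- With at most one variable, every minimal generator of `I` is one of the `μ_i`. -/
lemma IsMinGen.two_le_of_not_isCorner (hI : MPrimaryWithCorners I d) {β : Fin n → ℕ}
    (hβ : IsMinGen I β) (hc : ¬ IsCorner d β) : 2 ≤ n := by
  obtain ⟨-, hItop, -, hμ⟩ := hI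
  by_contra! hn
  obtain ⟨i, hi⟩ : ∃ i, β i ≠ 0 := by
    by_contra! h
    exact hβ.ne_zero hItop (funext h)
  have : Subsingleton (Fin n) := Fin.subsingleton_iff_le_one.2 (by omega)
  apply hc
  rcases le_total (d i) (β i) with h | h
  · rw [hβ.eq_single_of_le (hμ i).1 h]
    exact isCorner_single d i
  · rw [(hμ i).2 β hβ.1 fun j => by simpa [Subsingleton.elim j i] using h]
    exact isCorner_single d i

end Corners

section BoxIndices

variable {n : ℕ}

lemma sum_div_add_sum_div_le (d γ δ : Fin n → ℕ) :
    ∑ i, γ i / d i + ∑ i, δ i / d i ≤ ∑ i, (γ + δ) i / d i := by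
  rw [← Finset.sum_add_distrib]
  exact Finset.sum_le_sum fun i _ => Nat.div_add_div_le_add_div

lemma sum_sum_div_le {ι : Type*} (s : Finset ι) (d : Fin n → ℕ) (β : ι → Fin n → ℕ) :
    ∑ j ∈ s, ∑ i, β j i / d i ≤ ∑ i, (∑ j ∈ s, β j) i / d i := by
  classical
  induction s using Finset.induction_on with
  | empty => simp
  | insert j s hj ih =>
    rw [Finset.sum_insert hj, Finset.sum_insert hj]
    exact (add_le_add_right ih _).trans (sum_div_add_sum_div_le d _ _)

lemma sum_single_div {d : Fin n → ℕ} (hd : ∀ i, 0 < d i) (i : Fin n) :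
    ∑ j, (Pi.single i (d i) : Fin n → ℕ) j / d j = 1 := by
  rw [Finset.sum_eq_single i (fun j _ hji => by simp [hji]) (by simp)]
  simp [Nat.div_self (hd i)]

lemma card_le_sum_div_add_one {ι : Type*} {d : Fin n → ℕ} (hn : 2 ≤ n) (hd : ∀ i, 0 < d i) (T : Finset ι)
    (β : ι → Fin n → ℕ) (h : ∀ j ∈ T, (n : ℚ) / 2 ≤ ∑ i, (β j i : ℚ) / d i) :
    T.card ≤ ∑ i, (∑ j ∈ T, β j) i / d i + 1 := by
  set B := ∑ j ∈ T, β j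
  set S := ∑ i, B i / d i
  have hfloor (i : Fin n) : (B i : ℚ) / d i < (B i / d i : ℕ) + 1 := by
    rw [div_lt_iff₀ (by exact_mod_cast hd i)]
    exact_mod_cast (Nat.lt_div_mul_add (hd i)).trans_eq (by ring)
  have hsum : (T.card : ℚ) * (n / 2) < S + n :=
    calc (T.card : ℚ) * (n / 2) ≤ ∑ j ∈ T, ∑ i, (β j i : ℚ) / d i := by
          simpa using Finset.card_nsmul_le_sum T _ _ h
      _ = ∑ i, (B i : ℚ) / d i := by
          rw [Finset.sum_comm]
          simp [B, Finset.sum_div, Finset.sum_apply]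
      _ < ∑ i, ((B i / d i : ℕ) + 1 : ℚ) :=
          Finset.sum_lt_sum_of_nonempty (Finset.univ_nonempty_iff.2 ⟨⟨0, by omega⟩⟩)
            fun i _ => hfloor i
      _ = S + n := by simp [S, Finset.sum_add_distrib]
  by_contra! hlt
  have hS : (S : ℚ) + 2 ≤ T.card := by exact_mod_cast hlt
  have hn' : (2 : ℚ) ≤ n := by exact_mod_cast hn
  nlinarith [mul_le_mul_of_nonneg_right hS (by linarith : (0 : ℚ) ≤ n / 2),
    mul_nonneg (Nat.cast_nonneg (α := ℚ) S) (by linarith : (0 : ℚ) ≤ n / 2 - 1)]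

lemma inBox_of_le_of_le {d : Fin n → ℕ} (hd : ∀ i, 0 < d i) {a α : Fin n → ℕ}
    (hlow : ∀ i, (α i - 1) / d i ≤ a i) (hup : ∀ i, a i ≤ α i / d i) : InBox d a α := fun i =>
  ⟨(Nat.le_div_iff_mul_le (hd i)).1 (hup i), by
    have := (Nat.div_lt_iff_lt_mul (hd i)).1 (Nat.lt_add_one_of_le (hlow i))
    omega⟩

lemma exists_le_le_sum_eq {f g : Fin n → ℕ} (hfg : f ≤ g) (s : ℕ)
    (hfs : ∑ i, f i ≤ s) (hsg : s ≤ ∑ i, g i) :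
    ∃ a : Fin n → ℕ, f ≤ a ∧ a ≤ g ∧ ∑ i, a i = s := by
  induction s, hfs using Nat.le_induction with
  | base => exact ⟨f, le_rfl, hfg, rfl⟩
  | succ s hs ih =>
    obtain ⟨a, hfa, hag, hsum⟩ := ih (by omega)
    obtain ⟨i, hi⟩ : ∃ i, a i < g i := by
      by_contra! hga
      have := Finset.sum_le_sum fun i (_ : i ∈ Finset.univ) => hga i
      omega
    refine ⟨a + Pi.single i 1, hfa.trans le_self_add, fun j => ?_, ?_⟩
    · rcases eq_or_ne j i with rfl | hji
      · simpa using hi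
      · simpa [hji] using hag j
    · simp [Finset.sum_add_distrib, hsum]

end BoxIndices

section Bounds

variable {K : Type*} [Field K] {n : ℕ} {I : Ideal (MvPolynomial (Fin n) K)} {d : Fin n → ℕ}

lemma card_sub_one_le_sum_div (hI : MPrimaryWithCorners I d)
    (hsuff : ∀ α : Fin n → ℕ, IsMinGen I α → ¬ IsCorner d α →
      (n : ℚ) / 2 ≤ ∑ i, (α i : ℚ) / (d i : ℚ))
    {ι : Type*} (s : Finset ι) {β : ι → Fin n → ℕ} (hβ : ∀ j, IsMinGen I (β j)) :
    s.card - 1 ≤ ∑ i, (∑ j ∈ s, β j) i / d i := by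
  classical
  set P := {j ∈ s | IsCorner d (β j)}
  set T := {j ∈ s | ¬ IsCorner d (β j)}
  have hd := hI.2.2.1
  have hP : ∀ j ∈ P, ∑ i, β j i / d i = 1 := fun j hj => by
    obtain ⟨i, hi⟩ := (hβ j).eq_single_of_isCorner hI (Finset.mem_filter.1 hj).2
    rw [hi, sum_single_div hd]
  have hT : T.card ≤ ∑ i, (∑ j ∈ T, β j) i / d i + 1 := by
    rcases T.eq_empty_or_nonempty with hT | ⟨j, hj⟩
    · simp [hT]
    · exact card_le_sum_div_add_one ((hβ j).two_le_of_not_isCorner hI (Finset.mem_filter.1 hj).2)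
        hd T β fun j hj => hsuff _ (hβ j) (Finset.mem_filter.1 hj).2
  have hcard : P.card + T.card = s.card := Finset.card_filter_add_card_filter_not _
  calc s.card - 1 ≤ ∑ j ∈ P, ∑ i, β j i / d i + ∑ i, (∑ j ∈ T, β j) i / d i := by
        rw [Finset.sum_congr rfl hP, Finset.sum_const, smul_eq_mul, mul_one]
        omega
    _ ≤ ∑ i, (∑ j ∈ P, β j) i / d i + ∑ i, (∑ j ∈ T, β j) i / d i :=
        add_le_add_left (sum_sum_div_le P d β) _
    _ ≤ ∑ i, (∑ j ∈ s, β j) i / d i := by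
        rw [← Finset.sum_filter_add_sum_filter_not s (fun j => IsCorner d (β j))]
        exact sum_div_add_sum_div_le d _ _

lemma IsMinGen.sum_pred_div_lt (hμ : ∀ i, mono K (Pi.single i (d i)) ∈ I) (hd : ∀ i, 0 < d i)
    {l : ℕ} (hl : 0 < l) {α : Fin n → ℕ} (hα : IsMinGen (I ^ l) α) :
    ∑ i, (α i - 1) / d i < l := by
  by_contra! hle
  set c : Fin n → ℕ := fun i => (α i - 1) / d i
  have hcα : (fun i => c i * d i) ≤ α := fun i => (Nat.div_mul_le_self _ _).trans (Nat.sub_le _ _)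
  have hα_eq := hα.2 _ (Ideal.pow_le_pow_right hle (mono_corner_mem_pow hμ c)) hcα
  obtain ⟨i, hi⟩ : ∃ i, c i ≠ 0 := by
    by_contra! hc
    simp only [hc, Finset.sum_const_zero] at hle
    omega
  have hαi : α i = c i * d i := (congrFun hα_eq i).symm
  have hαi_pos : 0 < α i := hαi ▸ Nat.mul_pos (Nat.pos_of_ne_zero hi) (hd i)
  exact (Nat.div_lt_iff_lt_mul (hd i)).2 (by omega : α i - 1 < c i * d i) |>.ne rfl

end Bounds

/-- Theorem 3.7 (sufficient condition): if every minimal generator `x^α` of `I`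
which is not a corner satisfies `α_1/d_1 + ⋯ + α_n/d_n ≥ n/2`, then `I` is good. -/
theorem sufficient_condition {K : Type*} [Field K] {n : ℕ}
    (I : Ideal (MvPolynomial (Fin n) K)) (d : Fin n → ℕ)
    (hI : MPrimaryWithCorners I d)
    (hsuff : ∀ α : Fin n → ℕ, IsMinGen I α →
      (¬ ∃ k : Fin n → ℕ, α = fun i => k i * d i) →
      (n : ℚ) / 2 ≤ ∑ i, (α i : ℚ) / (d i : ℚ)) :
    IsGood I d := by
  intro l hl α hα
  obtain ⟨β, hβ, rfl⟩ := hα.exists_eq_sum hI.1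
  have hlower := card_sub_one_le_sum_div hI hsuff Finset.univ hβ
  rw [Finset.card_univ, Fintype.card_fin] at hlower
  have hupper := hα.sum_pred_div_lt (fun i => (hI.2.2.2 i).1) hI.2.2.1 hl
  obtain ⟨a, hlow, hup, hsum⟩ := exists_le_le_sum_eq
    (fun i => Nat.div_le_div_right (Nat.sub_le _ 1)) (l - 1) (by omega) hlower
  exact ⟨a, inBox_of_le_of_le hI.2.2.1 hlow hup, hsum⟩

end GasanovaRR
end

section
/- Let I be a good ideal in K[x_1,…,x_n] with n ≥ 4. Then for every k ≥ 2, the power I^k is a bad ideal, i.e. I^k is not good with respect to its own boxes. -/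
open MvPolynomial

namespace GasanovaRR

/-! The monomial `μ_1^3 μ_2^(k-1) μ_3^(k-1) μ_4^(k-1)` is a product of `3k` corners of `I`, hence
lies in `(I^k)^3`. A minimal generator of `(I^k)^3` dividing it has `i`-th exponent below `k d_i`
for every `i ≠ 1`, so if `I^k` were good its box would have to be `B^k_{2,0,…,0}`, forcing the
first exponent to be at least `2k d_1 > 3 d_1`. -/

lemma mono_single_pow_eq {K : Type*} [Field K] {n : ℕ} (i : Fin n) (m e : ℕ) :
    mono K (Pi.single i m) ^ e = MvPolynomial.monomial (e • Finsupp.single i m) 1 := by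
  rw [mono, Finsupp.equivFunOnFinite_symm_single, monomial_pow, one_pow]

lemma mono_mul_mem_pow_sum {K : Type*} [Field K] {n : ℕ} {I : Ideal (MvPolynomial (Fin n) K)}
    {d : Fin n → ℕ} (hd : ∀ i, mono K (Pi.single i (d i)) ∈ I) (a : Fin n → ℕ) :
    mono K (fun i => a i * d i) ∈ I ^ ∑ i, a i := by
  have hsum : Finsupp.equivFunOnFinite.symm (fun i => a i * d i)
      = ∑ i, a i • Finsupp.single i (d i) := by
    simp only [Finsupp.equivFunOnFinite_symm_eq_sum, Finsupp.smul_single, smul_eq_mul]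
  rw [mono, hsum, monomial_sum_one, ← Finset.prod_pow_eq_pow_sum]
  refine Ideal.prod_mem_prod fun i _ => ?_
  rw [← mono_single_pow_eq]
  exact Ideal.pow_mem_pow (hd i) (a i)

lemma exists_isMinGen_le_s13 {K : Type*} [Field K] {n : ℕ} {J : Ideal (MvPolynomial (Fin n) K)}
    {γ : Fin n → ℕ} (h : mono K γ ∈ J) : ∃ α ≤ γ, IsMinGen J α := by
  obtain ⟨α, hαγ, hmin⟩ := exists_minimal_le_of_wellFoundedLT (fun β => mono K β ∈ J) γ h
  exact ⟨α, hαγ, hmin.prop, fun β hβ hβα => le_antisymm hβα (hmin.le_of_le hβ hβα)⟩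

lemma IsGood.mul_le_of_mono_mem_pow {K : Type*} [Field K] {n : ℕ}
    {J : Ideal (MvPolynomial (Fin n) K)} {c : Fin n → ℕ} (hJ : IsGood J c) {l : ℕ} (hl : 1 ≤ l)
    {γ : Fin n → ℕ} (hγ : mono K γ ∈ J ^ l) {i₀ : Fin n} (hlt : ∀ i ≠ i₀, γ i < c i) :
    (l - 1) * c i₀ ≤ γ i₀ := by
  obtain ⟨α, hαγ, hα⟩ := exists_isMinGen_le_s13 hγ
  obtain ⟨b, hbox, hbsum⟩ := hJ l hl α hα
  have hb : ∀ i ≠ i₀, b i = 0 := fun i hi => by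
    by_contra hbi
    have hcb : c i ≤ b i * c i := Nat.le_mul_of_pos_left _ (Nat.pos_of_ne_zero hbi)
    exact absurd ((hcb.trans (hbox i).1).trans (hαγ i)) (hlt i hi).not_ge
  have hb₀ : b i₀ = l - 1 := by
    rw [← hbsum, Finset.sum_eq_single i₀ (fun i _ hi => hb i hi) (by simp)]
  calc (l - 1) * c i₀ = b i₀ * c i₀ := by rw [hb₀]
    _ ≤ α i₀ := (hbox i₀).1
    _ ≤ γ i₀ := hαγ i₀

lemma exists_three_mul_composition {n : ℕ} (hn : 4 ≤ n) {k : ℕ} (hk : 1 ≤ k) :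
    ∃ (a : Fin n → ℕ) (i₀ : Fin n), a i₀ = 3 ∧ (∀ i ≠ i₀, a i < k) ∧ ∑ i, a i = 3 * k := by
  let f : ℕ → ℕ := fun j => if j = 0 then 3 else if j < 4 then k - 1 else 0
  refine ⟨fun i => f i, ⟨0, by omega⟩, rfl, fun i hi => ?_, ?_⟩
  · have hi' : (i : ℕ) ≠ 0 := fun h => hi (Fin.ext h)
    simp only [f, hi', if_false]
    split_ifs <;> omega
  · rw [Fin.sum_univ_eq_sum_range f, ← Finset.sum_range_add_sum_Ico f hn,
      Finset.sum_eq_zero (s := Finset.Ico 4 n) fun j hj => by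
        have hj4 := (Finset.mem_Ico.mp hj).1
        simp only [f]
        split_ifs <;> omega]
    simp only [Finset.sum_range_succ, Finset.range_one, Finset.sum_singleton, ↓reduceIte,
      one_ne_zero, Nat.one_lt_ofNat, OfNat.ofNat_ne_zero, Nat.reduceLT, Nat.lt_add_one, add_zero, f]
    omega

theorem power_bad_ge_four_vars_general {K : Type*} [Field K] {n : ℕ} (hn : 4 ≤ n)
    (I : Ideal (MvPolynomial (Fin n) K)) (d : Fin n → ℕ)
    (hI : MPrimaryWithCorners I d) :
    ∀ k : ℕ, 2 ≤ k → ¬ IsGood (I ^ k) (fun i => k * d i) := by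
  intro k hk hgood
  obtain ⟨-, -, hd, hcorner⟩ := hI
  obtain ⟨a, i₀, ha₀, ha, hsum⟩ := exists_three_mul_composition hn (k := k) (by omega)
  have hmem : mono K (fun i => a i * d i) ∈ (I ^ k) ^ 3 := by
    rw [← pow_mul, mul_comm, ← hsum]
    exact mono_mul_mem_pow_sum (fun i => (hcorner i).1) a
  have hlt : ∀ i ≠ i₀, a i * d i < k * d i := fun i hi =>
    Nat.mul_lt_mul_of_pos_right (ha i hi) (hd i)
  have hle := hgood.mul_le_of_mono_mem_pow (by norm_num) hmem hlt
  rw [ha₀] at hle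
  have hd₀ := hd i₀
  nlinarith

/-- Proposition 10.5: for `n ≥ 4`, every power `I^k`, `k ≥ 2`, of a good ideal `I`
is bad (w.r.t. its own boxes, of sizes `k·d_i`). -/
theorem power_bad_ge_four_vars {K : Type*} [Field K] {n : ℕ} (hn : 4 ≤ n)
    (I : Ideal (MvPolynomial (Fin n) K)) (d : Fin n → ℕ)
    (hI : MPrimaryWithCorners I d) (hgood : IsGood I d) :
    ∀ k : ℕ, 2 ≤ k → ¬ IsGood (I ^ k) (fun i => k * d i) :=
  power_bad_ge_four_vars_general hn I d hI

end GasanovaRR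
end
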